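/- With $S$ distributed according to the stationary CDF $F_S$ above and $\Delta \sim$ Laplace($\lambda$) independent of $S$, the stationary loss-of-load probability satisfies $\mathbb{P}\{\Delta < -G^{\max} - \alpha_d S\} = \int_{-\infty}^{-G^{\max}} \frac{\lambda}{2} e^{\lambda\delta} F_S\big(-\frac{\delta + G^{\max}}{\alpha_d}\big)\,d\delta = \frac{1}{2} e^{-\lambda G^{\max}} \cdot \frac{1-\alpha}{1 - \alpha e^{-(1/\alpha_c - \alpha_d)\lambda S^{\max}/2}}$. -/

import Mathlib

/-!
Conditioning on `Δ = δ` (independence and Fubini), the loss event becomes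
`S < -(δ + Gᵐᵃˣ)/α_d`, whose probability is `F_S(-(δ + Gᵐᵃˣ)/α_d)` for all but the countably
many `δ` that hit an atom of `S`; against the Laplace density `(λ/2) e^{-λ|δ|}` this gives the
integral, which vanishes for `δ > -Gᵐᵃˣ` because `S ≥ 0`. On `δ ≤ -Gᵐᵃˣ - α_d Sᵐᵃˣ` even a full
storage cannot cover the deficit (`F_S = 1`), and on the remaining interval `F_S` is an
exponential in `δ` with rate `m = λ(1 - α)/(2α)`, so the integral is elementary; the closed form
comes from `λ/(λ + m) = 2α/(1 + α)`.
-/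

open MeasureTheory ProbabilityTheory Real

/-- Stationary CDF of the stored power under the greedy policy. -/
noncomputable def statCDF (l αc αd Smax : ℝ) (s : ℝ) : ℝ :=
  if s < 0 then 0
  else if s < Smax then
    (1 - (1 + αc * αd) / 2 * exp (-((1 / αc - αd) * l * s / 2))) /
      (1 - αc * αd * exp (-((1 / αc - αd) * l * Smax / 2)))
  else 1

/-- CDF of a Laplace(λ) random variable. -/
noncomputable def laplaceCDF (l x : ℝ) : ℝ :=
  if x < 0 then exp (l * x) / 2 else 1 - exp (-(l * x)) / 2

open Set

noncomputable def laplacePDF (l x : ℝ) : ℝ := l / 2 * exp (-(l * |x|))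

section Laplace

variable {l : ℝ}

lemma laplacePDF_of_nonpos {x : ℝ} (hx : x ≤ 0) : laplacePDF l x = l / 2 * exp (l * x) := by
  rw [laplacePDF, abs_of_nonpos hx, mul_neg, neg_neg]

lemma laplacePDF_of_nonneg {x : ℝ} (hx : 0 ≤ x) : laplacePDF l x = l / 2 * exp (-l * x) := by
  rw [laplacePDF, abs_of_nonneg hx, neg_mul]

lemma laplacePDF_nonneg (hl : 0 ≤ l) (x : ℝ) : 0 ≤ laplacePDF l x := by
  unfold laplacePDF; positivity

lemma continuous_laplacePDF : Continuous (laplacePDF l) := by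
  unfold laplacePDF; fun_prop

lemma integral_Iic_laplacePDF_of_nonpos (hl : 0 < l) {x : ℝ} (hx : x ≤ 0) :
    ∫ t in Iic x, laplacePDF l t = exp (l * x) / 2 := by
  rw [setIntegral_congr_fun measurableSet_Iic fun t ht => laplacePDF_of_nonpos (le_trans ht hx),
    integral_const_mul, integral_exp_mul_Iic hl]
  field_simp

lemma integral_Ioi_laplacePDF_of_nonneg (hl : 0 < l) {x : ℝ} (hx : 0 ≤ x) :
    ∫ t in Ioi x, laplacePDF l t = exp (-(l * x)) / 2 := by
  rw [setIntegral_congr_fun measurableSet_Ioi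
      fun t ht => laplacePDF_of_nonneg (hx.trans (le_of_lt ht)),
    integral_const_mul, integral_exp_mul_Ioi (neg_neg_of_pos hl)]
  field_simp

lemma integrable_laplacePDF (hl : 0 < l) : Integrable (laplacePDF l) := by
  rw [← integrableOn_univ, ← Iic_union_Ioi (a := (0 : ℝ)), integrableOn_union]
  refine ⟨IntegrableOn.congr_fun ((integrableOn_exp_mul_Iic hl 0).const_mul (l / 2))
      (fun t ht => (laplacePDF_of_nonpos ht).symm) measurableSet_Iic,
    IntegrableOn.congr_fun ((integrableOn_exp_mul_Ioi (neg_neg_of_pos hl) 0).const_mul (l / 2))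
      (fun t ht => (laplacePDF_of_nonneg (le_of_lt ht)).symm) measurableSet_Ioi⟩

lemma integral_Iic_laplacePDF (hl : 0 < l) (x : ℝ) :
    ∫ t in Iic x, laplacePDF l t = laplaceCDF l x := by
  rcases lt_or_ge x 0 with hx | hx
  · rw [integral_Iic_laplacePDF_of_nonpos hl hx.le, laplaceCDF, if_pos hx]
  have htotal : ∫ t, laplacePDF l t = 1 := by
    rw [← intervalIntegral.integral_Iic_add_Ioi (b := 0) (integrable_laplacePDF hl).integrableOn
      (integrable_laplacePDF hl).integrableOn, integral_Iic_laplacePDF_of_nonpos hl le_rfl,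
      integral_Ioi_laplacePDF_of_nonneg hl le_rfl]
    norm_num
  rw [laplaceCDF, if_neg (not_lt.2 hx), ← htotal, ← integral_Ioi_laplacePDF_of_nonneg hl hx,
    ← intervalIntegral.integral_Iic_add_Ioi (integrable_laplacePDF hl).integrableOn
      (integrable_laplacePDF hl).integrableOn, add_sub_cancel_right]

lemma map_eq_withDensity_laplacePDF {Ω : Type*} [MeasurableSpace Ω] {μ : Measure Ω}
    [IsFiniteMeasure μ] {X : Ω → ℝ} (hX : Measurable X) (hl : 0 < l)
    (hlaw : ∀ x, (μ {ω | X ω ≤ x}).toReal = laplaceCDF l x) :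
    μ.map X = volume.withDensity (fun x => ENNReal.ofReal (laplacePDF l x)) := by
  refine Measure.ext_of_Iic _ _ fun x => ?_
  rw [Measure.map_apply hX measurableSet_Iic, withDensity_apply _ measurableSet_Iic,
    ← ofReal_integral_eq_lintegral_ofReal (integrable_laplacePDF hl).integrableOn
      (ae_of_all _ (laplacePDF_nonneg hl.le)), integral_Iic_laplacePDF hl, ← hlaw,
    ENNReal.ofReal_toReal (measure_ne_top _ _)]
  rfl

end Laplace

section Probability

variable {Ω : Type*} [MeasurableSpace Ω] {μ : Measure Ω}

theorem ProbabilityTheory.IndepFun.measure_mem_eq_lintegral {α β : Type*} [MeasurableSpace α]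
    [MeasurableSpace β] [IsFiniteMeasure μ] {X : Ω → α} {Y : Ω → β} (hX : Measurable X)
    (hY : Measurable Y) (hXY : IndepFun X Y μ) {E : Set (α × β)} (hE : MeasurableSet E) :
    μ {ω | (X ω, Y ω) ∈ E} = ∫⁻ x, μ {ω | (x, Y ω) ∈ E} ∂μ.map X := by
  rw [show {ω | (X ω, Y ω) ∈ E} = (fun ω => (X ω, Y ω)) ⁻¹' E from rfl,
    ← Measure.map_apply (hX.prodMk hY) hE,
    (indepFun_iff_map_prod_eq_prod_map_map hX.aemeasurable hY.aemeasurable).mp hXY,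
    Measure.prod_apply hE]
  refine lintegral_congr fun x => ?_
  rw [Measure.map_apply hY (measurable_prodMk_left hE)]
  rfl

lemma ae_measure_lt_eq_measure_le (X : Ω → ℝ) {f : ℝ → ℝ} (hf : Function.Injective f) :
    ∀ᵐ x, μ {ω | X ω < f x} = μ {ω | X ω ≤ f x} := by
  -- `X` has an atom at only countably many points, and `f` pulls them back injectively.
  have hcount := (countable_meas_le_ne_meas_lt μ (fun ω => -X ω)).preimage
    (neg_injective.comp hf)
  rw [ae_iff]
  refine measure_mono_null (fun x hx => ?_) (hcount.measure_zero volume)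
  simpa [neg_le_neg_iff, neg_lt_neg_iff] using Ne.symm hx

end Probability

section Loss

variable {Ω : Type*} [MeasurableSpace Ω] {μ : Measure Ω} [IsFiniteMeasure μ] {S Δ : Ω → ℝ}
  {l αd G : ℝ}

lemma measure_lt_eq_lintegral_laplacePDF (hl : 0 < l) (hαd : 0 < αd) (hS : Measurable S)
    (hΔ : Measurable Δ) (hind : IndepFun S Δ μ)
    (hlawΔ : ∀ x, (μ {ω | Δ ω ≤ x}).toReal = laplaceCDF l x) :
    μ {ω | Δ ω < -G - αd * S ω} =
      ∫⁻ δ, ENNReal.ofReal (laplacePDF l δ) * μ {ω | S ω ≤ -((δ + G) / αd)} := by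
  have hslice : ∀ δ, {ω | δ < -G - αd * S ω} = {ω | S ω < -((δ + G) / αd)} := fun δ => by
    ext ω
    simp only [mem_ofPred_eq, lt_neg, div_lt_iff₀ hαd]
    constructor <;> intro h <;> linarith
  have hinj : Function.Injective fun δ : ℝ => -((δ + G) / αd) := fun x y hxy => by
    simpa [hαd.ne'] using hxy
  calc μ {ω | Δ ω < -G - αd * S ω} = ∫⁻ δ, μ {ω | δ < -G - αd * S ω} ∂μ.map Δ :=
        hind.symm.measure_mem_eq_lintegral (E := {p | p.1 < -G - αd * p.2}) hΔ hS
          (measurableSet_lt measurable_fst (by fun_prop))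
    _ = ∫⁻ δ, ENNReal.ofReal (laplacePDF l δ) * μ {ω | S ω < -((δ + G) / αd)} := by
      rw [map_eq_withDensity_laplacePDF hΔ hl hlawΔ,
        lintegral_withDensity_eq_lintegral_mul_non_measurable _
          continuous_laplacePDF.measurable.ennreal_ofReal
          (ae_of_all _ fun _ => ENNReal.ofReal_lt_top)]
      simp only [Pi.mul_apply, hslice]
    _ = _ := lintegral_congr_ae <| by
      filter_upwards [ae_measure_lt_eq_measure_le S hinj] with δ hδ
      rw [hδ]

lemma toReal_measure_lt_eq_integral_laplace [IsProbabilityMeasure μ] {F : ℝ → ℝ}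
    (hl : 0 < l) (hαd : 0 < αd) (hG : 0 ≤ G)
    (hS : Measurable S) (hΔ : Measurable Δ) (hind : IndepFun S Δ μ)
    (hlawS : ∀ s, (μ {ω | S ω ≤ s}).toReal = F s) (hF : ∀ s < 0, F s = 0)
    (hlawΔ : ∀ x, (μ {ω | Δ ω ≤ x}).toReal = laplaceCDF l x) :
    (μ {ω | Δ ω < -G - αd * S ω}).toReal =
      ∫ δ in Iic (-G), l / 2 * exp (l * δ) * F (-((δ + G) / αd)) := by
  have hF_nonneg : ∀ s, 0 ≤ F s := fun s => hlawS s ▸ ENNReal.toReal_nonneg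
  have hF_le_one : ∀ s, F s ≤ 1 := fun s => hlawS s ▸ measureReal_le_one
  have hF_mono : Monotone F := fun s t hst => by
    rw [← hlawS, ← hlawS]
    exact ENNReal.toReal_mono (measure_ne_top _ _)
      (measure_mono fun ω (h : S ω ≤ s) => h.trans hst)
  set g : ℝ → ℝ := fun δ => laplacePDF l δ * F (-((δ + G) / αd))
  have hg_nonneg : ∀ δ, 0 ≤ g δ := fun δ => mul_nonneg (laplacePDF_nonneg hl.le δ) (hF_nonneg _)
  have hg_int : Integrable g := by
    refine (integrable_laplacePDF hl).mono' ?_ (ae_of_all _ fun δ => ?_)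
    · exact (continuous_laplacePDF.measurable.mul
        (hF_mono.measurable.comp (by fun_prop))).aestronglyMeasurable
    · rw [Real.norm_eq_abs, abs_of_nonneg (hg_nonneg δ)]
      exact mul_le_of_le_one_right (laplacePDF_nonneg hl.le δ) (hF_le_one _)
  have hg_supp : ∀ δ ∉ Iic (-G), g δ = 0 := fun δ hδ => by
    have hδ' : -((δ + G) / αd) < 0 :=
      neg_neg_of_pos (div_pos (by linarith [not_le.1 (show ¬δ ≤ -G from hδ)]) hαd)
    rw [show g δ = laplacePDF l δ * F _ from rfl, hF _ hδ', mul_zero]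
  have hprob : μ {ω | Δ ω < -G - αd * S ω} = ENNReal.ofReal (∫ δ, g δ) := by
    rw [measure_lt_eq_lintegral_laplacePDF hl hαd hS hΔ hind hlawΔ,
      ofReal_integral_eq_lintegral_ofReal hg_int (ae_of_all _ hg_nonneg)]
    refine lintegral_congr fun δ => ?_
    rw [ENNReal.ofReal_mul (laplacePDF_nonneg hl.le δ), ← hlawS,
      ENNReal.ofReal_toReal (measure_ne_top _ _)]
  rw [hprob, ENNReal.toReal_ofReal (integral_nonneg hg_nonneg),
    ← setIntegral_eq_integral_of_forall_compl_eq_zero hg_supp]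
  refine setIntegral_congr_fun measurableSet_Iic fun δ hδ => ?_
  rw [show g δ = laplacePDF l δ * F _ from rfl,
    laplacePDF_of_nonpos (le_trans hδ (neg_nonpos.2 hG))]

end Loss

lemma integral_Iic_eq_of_eqOn_Iic_of_eqOn_Ioc {f g h : ℝ → ℝ} {a b : ℝ} (hab : a ≤ b)
    (hg : IntegrableOn g (Iic a)) (hh : IntegrableOn h (Iic b))
    (hfg : EqOn f g (Iic a)) (hfh : EqOn f h (Ioc a b)) :
    ∫ x in Iic b, f x = (∫ x in Iic a, g x) + ((∫ x in Iic b, h x) - ∫ x in Iic a, h x) := by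
  rw [intervalIntegral.integral_Iic_sub_Iic (hh.mono_set (Iic_subset_Iic.2 hab)) hh,
    intervalIntegral.integral_of_le hab, ← Iic_union_Ioc_eq_Iic hab,
    setIntegral_union (Iic_disjoint_Ioc le_rfl) measurableSet_Ioc
      (hg.congr_fun hfg.symm measurableSet_Iic)
      ((hh.mono_set Ioc_subset_Iic_self).congr_fun hfh.symm measurableSet_Ioc),
    setIntegral_congr_fun measurableSet_Iic hfg, setIntegral_congr_fun measurableSet_Ioc hfh]

lemma integral_Iic_exp_sub_const_mul_exp {p q : ℝ} (hp : 0 < p) (hq : 0 < q) (C b : ℝ) :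
    ∫ x in Iic b, (exp (p * x) - C * exp (q * x)) = exp (p * b) / p - C * (exp (q * b) / q) := by
  rw [integral_sub (integrableOn_exp_mul_Iic hp b) ((integrableOn_exp_mul_Iic hq b).const_mul C),
    integral_const_mul, integral_exp_mul_Iic hp, integral_exp_mul_Iic hq]

section StatCDF

variable {l αc αd Smax s : ℝ}

lemma statCDF_of_neg (hs : s < 0) : statCDF l αc αd Smax s = 0 := if_pos hs

lemma statCDF_of_mem_Ico (hs : s ∈ Ico 0 Smax) :
    statCDF l αc αd Smax s =
      (1 - (1 + αc * αd) / 2 * exp (-((1 / αc - αd) * l * s / 2))) /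
        (1 - αc * αd * exp (-((1 / αc - αd) * l * Smax / 2))) := by
  rw [statCDF, if_neg (not_lt.2 hs.1), if_pos hs.2]

lemma statCDF_of_le (hSmax : 0 ≤ Smax) (hs : Smax ≤ s) : statCDF l αc αd Smax s = 1 := by
  rw [statCDF, if_neg (not_lt.2 (hSmax.trans hs)), if_neg (not_lt.2 hs)]

lemma statCDF_neg_div_of_le {δ G : ℝ} (hαd : 0 < αd) (hSmax : 0 ≤ Smax)
    (hδ : δ ≤ -G - αd * Smax) : statCDF l αc αd Smax (-((δ + G) / αd)) = 1 := by
  refine statCDF_of_le hSmax ?_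
  rw [le_neg, div_le_iff₀ hαd]
  linarith

lemma statCDF_neg_div_of_mem_Ioc {δ G : ℝ} (hαc : 0 < αc) (hαd : 0 < αd)
    (hδ : δ ∈ Ioc (-G - αd * Smax) (-G)) :
    statCDF l αc αd Smax (-((δ + G) / αd)) =
      (1 - (1 + αc * αd) / 2 * exp ((1 / αc - αd) * l / (2 * αd) * (δ + G))) /
        (1 - αc * αd * exp (-((1 / αc - αd) * l * Smax / 2))) := by
  obtain ⟨hδa, hδG⟩ := hδ
  have hs : -((δ + G) / αd) ∈ Ico 0 Smax := by
    refine ⟨neg_nonneg.2 (div_nonpos_of_nonpos_of_nonneg (by linarith) hαd.le), ?_⟩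
    rw [neg_lt, lt_div_iff₀ hαd]
    linarith
  rw [statCDF_of_mem_Ico hs]
  field_simp

lemma integral_Iic_mul_statCDF (hl : 0 < l) (hαc : 0 < αc) (hαd : 0 < αd) (hα : αc * αd < 1)
    (hSmax : 0 < Smax) (G : ℝ) :
    ∫ δ in Iic (-G), l / 2 * exp (l * δ) * statCDF l αc αd Smax (-((δ + G) / αd)) =
      1 / 2 * exp (-(l * G)) *
        ((1 - αc * αd) / (1 - αc * αd * exp (-((1 / αc - αd) * l * Smax / 2)))) := by
  set α := αc * αd with hα_def
  set m := (1 / αc - αd) * l / (2 * αd) with hm_def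
  set E := exp (-((1 / αc - αd) * l * Smax / 2)) with hE_def
  set a := -G - αd * Smax with ha_def
  have hα0 : 0 < α := mul_pos hαc hαd
  have hm_eq : m = l * (1 - α) / (2 * α) := by rw [hm_def, hα_def]; field_simp
  have hlm : l + m = l * (1 + α) / (2 * α) := by rw [hm_eq]; field_simp; ring
  have hm : 0 < m := by rw [hm_eq]; exact div_pos (mul_pos hl (by linarith)) (by positivity)
  have hE : E = exp (m * (a + G)) := by
    rw [hE_def, hm_def, ha_def]; congr 1; field_simp; ring
  have hD : 0 < 1 - α * E := by
    have : E < 1 := by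
      rw [hE, exp_lt_one_iff]
      exact mul_neg_of_pos_of_neg hm (by nlinarith)
    nlinarith
  set φ := fun δ => l / 2 / (1 - α * E) *
    (exp (l * δ) - (1 + α) / 2 * exp (m * G) * exp ((l + m) * δ))
  have hleft : EqOn (fun δ => l / 2 * exp (l * δ) * statCDF l αc αd Smax (-((δ + G) / αd)))
      (fun δ => l / 2 * exp (l * δ)) (Iic a) := fun δ hδ => by
    simp only [statCDF_neg_div_of_le hαd hSmax.le hδ, mul_one]
  have hmid : EqOn (fun δ => l / 2 * exp (l * δ) * statCDF l αc αd Smax (-((δ + G) / αd)))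
      φ (Ioc a (-G)) := fun δ hδ => by
    simp only [φ, statCDF_neg_div_of_mem_Ioc hαc hαd hδ, ← hm_def, ← hE_def, ← hα_def]
    rw [mul_add, exp_add, add_mul, exp_add]
    ring
  have hφ_int : IntegrableOn φ (Iic (-G)) :=
    ((integrableOn_exp_mul_Iic hl _).sub
      ((integrableOn_exp_mul_Iic (add_pos hl hm) _).const_mul _)).const_mul _
  have hG : exp ((l + m) * -G) = exp (-(l * G)) * (exp (m * G))⁻¹ := by
    rw [← exp_neg, ← exp_add]; ring_nf
  have ha : exp ((l + m) * a) = exp (l * a) * E * (exp (m * G))⁻¹ := by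
    rw [hE, ← exp_neg, ← exp_add, ← exp_add]; ring_nf
  rw [integral_Iic_eq_of_eqOn_Iic_of_eqOn_Ioc (by nlinarith)
      ((integrableOn_exp_mul_Iic hl a).const_mul _) hφ_int hleft hmid,
    integral_const_mul, integral_exp_mul_Iic hl, integral_const_mul, integral_const_mul,
    integral_Iic_exp_sub_const_mul_exp hl (add_pos hl hm),
    integral_Iic_exp_sub_const_mul_exp hl (add_pos hl hm), hG, ha, hlm]
  field_simp
  ring

end StatCDF

/-- Stationary loss-of-load probability: with `S` stationary and `Δ ~ Laplace(λ)`
independent of `S`,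
`P{Δ < -Gᵐᵃˣ - αd S} = ∫_{-∞}^{-Gᵐᵃˣ} (λ/2)e^{λδ} F_S(-(δ+Gᵐᵃˣ)/αd) dδ
  = ½ e^{-λGᵐᵃˣ} (1-α)/(1 - α e^{-(1/αc - αd)λSᵐᵃˣ/2})`. -/
theorem stmt9 {Ω : Type*} [MeasureSpace Ω] [IsProbabilityMeasure (ℙ : Measure Ω)]
    (S Δ : Ω → ℝ) (l αc αd Smax Gmax : ℝ) (hl : 0 < l)
    (hαc : αc ∈ Set.Ioo (0 : ℝ) 1) (hαd : αd ∈ Set.Ioo (0 : ℝ) 1)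
    (hSmax : 0 < Smax) (hGmax : 0 < Gmax)
    (hmS : Measurable S) (hmΔ : Measurable Δ)
    (hindep : IndepFun S Δ ℙ)
    (hlawS : ∀ s, (ℙ {ω | S ω ≤ s}).toReal = statCDF l αc αd Smax s)
    (hlawΔ : ∀ x, (ℙ {ω | Δ ω ≤ x}).toReal = laplaceCDF l x) :
    (ℙ {ω | Δ ω < -Gmax - αd * S ω}).toReal =
      (∫ δ in Set.Iic (-Gmax),
        (l / 2) * exp (l * δ) * statCDF l αc αd Smax (-((δ + Gmax) / αd))) ∧
    (ℙ {ω | Δ ω < -Gmax - αd * S ω}).toReal =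
      (1 / 2) * exp (-(l * Gmax)) *
        ((1 - αc * αd) / (1 - αc * αd * exp (-((1 / αc - αd) * l * Smax / 2)))) := by
  have hloss := toReal_measure_lt_eq_integral_laplace hl hαd.1 hGmax.le hmS hmΔ hindep hlawS
    (fun _ => statCDF_of_neg) hlawΔ
  have hα : αc * αd < 1 := mul_lt_one_of_nonneg_of_lt_one_left hαc.1.le hαc.2 hαd.2.le
  exact ⟨hloss, hloss.trans (integral_Iic_mul_statCDF hl hαc.1 hαd.1 hα hSmax Gmax)⟩
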